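/- arXiv:2511.03118 — 2 statements merged into one kernel-verified Lean document; each statement's English description precedes it below -/
import Mathlib

section
/- Let q, r : ℝ×ℝ → ℂ be smooth functions of (x,t) and let ρ ∈ ℝ. Then the zero-curvature equation ∂ₜP(λ) − ∂ₓQ(λ) + P(λ)Q(λ) − Q(λ)P(λ) = 0 holds at every (x,t) ∈ ℝ² for every λ ∈ ℂ\{0} if and only if (q,r) satisfies the coupled system (S) at every (x,t) ∈ ℝ². -/
open Complex

/-- Partial derivative in the space variable `x` (first coordinate). -/
noncomputable def pdx (f : ℝ × ℝ → ℂ) : ℝ × ℝ → ℂ :=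
  fun p => deriv (fun x => f (x, p.2)) p.1

/-- Partial derivative in the time variable `t` (second coordinate). -/
noncomputable def pdt (f : ℝ × ℝ → ℂ) : ℝ × ℝ → ℂ :=
  fun p => deriv (fun t => f (p.1, t)) p.2

/-- The coupled system (S). -/
def CoupledS (q r : ℝ × ℝ → ℂ) (ρ : ℝ) : Prop :=
  ∀ p : ℝ × ℝ,
    I * pdt q p + I * pdx (pdx (pdx q)) p
        + (3 * q p * r p + 2 * (ρ : ℂ)) * pdx (pdx q) p
        + 3 * r p * (pdx q p) ^ 2
        + (1 / 2) * (-9 * I * (q p) ^ 2 * (r p) ^ 2 - 20 * I * (ρ : ℂ) * q p * r p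
            + 8 * I * (ρ : ℂ) ^ 2 + 6 * q p * pdx r p) * pdx q p
        + I * (-3 * (q p) ^ 3 * r p - 2 * (ρ : ℂ) * (q p) ^ 2) * pdx r p
        - 3 * (ρ : ℂ) * (r p) ^ 2 * (q p) ^ 3
        - 4 * (ρ : ℂ) ^ 2 * r p * (q p) ^ 2
        + 8 * ((ρ : ℂ) ^ 3 - (ρ : ℂ) ^ 2) * q p = 0 ∧
    I * pdt r p + I * pdx (pdx (pdx r)) p
        - (3 * q p * r p + 2 * (ρ : ℂ)) * pdx (pdx r) p
        - 3 * q p * (pdx r p) ^ 2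
        + (1 / 2) * (-9 * I * (q p) ^ 2 * (r p) ^ 2 - 20 * I * (ρ : ℂ) * q p * r p
            + 8 * I * (ρ : ℂ) ^ 2 - 6 * r p * pdx q p) * pdx r p
        + I * (-3 * (r p) ^ 3 * q p - 2 * (ρ : ℂ) * (r p) ^ 2) * pdx q p
        + 3 * (ρ : ℂ) * (r p) ^ 3 * (q p) ^ 2
        + 4 * (ρ : ℂ) ^ 2 * (r p) ^ 2 * q p
        + 8 * (-(ρ : ℂ) ^ 3 + (ρ : ℂ) ^ 2) * r p = 0

/-- Entry `Q₁` of the Lax matrix `Q(λ)` of the coupled system. -/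
noncomputable def Qent1 (q r : ℝ × ℝ → ℂ) (ρ : ℝ) (l : ℂ) (p : ℝ × ℝ) : ℂ :=
  -(3 * I / 2) * (q p) ^ 2 * (r p) ^ 2 / l ^ 2 - 4 * I * (ρ : ℂ) ^ 2
    - pdx r p * q p / l ^ 2 + pdx q p * r p / l ^ 2
    - 2 * I * q p * r p / l ^ 4 + 8 * I * (ρ : ℂ) / l ^ 4 - 4 * I / l ^ 6

/-- Entry `Q₂` of the Lax matrix `Q(λ)` of the coupled system. -/
noncomputable def Qent2 (q r : ℝ × ℝ → ℂ) (ρ : ℝ) (l : ℂ) (p : ℝ × ℝ) : ℂ :=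
  -pdx (pdx q) p / l + 3 * I * pdx q p * q p * r p / l + 2 * I * pdx q p / l ^ 3
    + (3 / 2) * (q p) ^ 3 * (r p) ^ 2 / l + 2 * (q p) ^ 2 * r p * (ρ : ℂ) / l
    + 2 * (q p) ^ 2 * r p / l ^ 3 - 4 * q p * (ρ : ℂ) ^ 2 / l
    - 4 * q p * (ρ : ℂ) / l ^ 3 + 4 * q p / l ^ 5

/-- Entry `Q₃` of the Lax matrix `Q(λ)` of the coupled system. -/
noncomputable def Qent3 (q r : ℝ × ℝ → ℂ) (ρ : ℝ) (l : ℂ) (p : ℝ × ℝ) : ℂ :=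
  -pdx (pdx r) p / l - 3 * I * pdx r p * q p * r p / l - 2 * I * pdx r p / l ^ 3
    + (3 / 2) * (q p) ^ 2 * (r p) ^ 3 / l + 2 * q p * (r p) ^ 2 * (ρ : ℂ) / l
    + 2 * q p * (r p) ^ 2 / l ^ 3 - 4 * r p * (ρ : ℂ) ^ 2 / l
    - 4 * r p * (ρ : ℂ) / l ^ 3 + 4 * r p / l ^ 5

/-- The Lax matrix `P(λ)` of the coupled system. -/
noncomputable def LaxP (q r : ℝ × ℝ → ℂ) (ρ : ℝ) (l : ℂ) (p : ℝ × ℝ) :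
    Matrix (Fin 2) (Fin 2) ℂ :=
  !![-I / l ^ 2 + (ρ : ℂ) * I, q p / l; r p / l, I / l ^ 2 - (ρ : ℂ) * I]

/-- The Lax matrix `Q(λ)` of the coupled system. -/
noncomputable def LaxQ (q r : ℝ × ℝ → ℂ) (ρ : ℝ) (l : ℂ) (p : ℝ × ℝ) :
    Matrix (Fin 2) (Fin 2) ℂ :=
  !![Qent1 q r ρ l p, Qent2 q r ρ l p; Qent3 q r ρ l p, -Qent1 q r ρ l p]

/-- Entrywise spatial derivative of a matrix-valued function. -/
noncomputable def pdxM (M : ℝ × ℝ → Matrix (Fin 2) (Fin 2) ℂ) (p : ℝ × ℝ) :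
    Matrix (Fin 2) (Fin 2) ℂ :=
  Matrix.of fun i j => pdx (fun p' => M p' i j) p

/-- Entrywise time derivative of a matrix-valued function. -/
noncomputable def pdtM (M : ℝ × ℝ → Matrix (Fin 2) (Fin 2) ℂ) (p : ℝ × ℝ) :
    Matrix (Fin 2) (Fin 2) ℂ :=
  Matrix.of fun i j => pdt (fun p' => M p' i j) p

private lemma slice_hasDerivAt (f : ℝ × ℝ → ℂ) (hf : ContDiff ℝ (⊤ : ℕ∞) f) (p : ℝ × ℝ) :
    HasDerivAt (fun y : ℝ => f (y, p.2)) (pdx f p) p.1 ∧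
    HasDerivAt (fun y : ℝ => pdx f (y, p.2)) (pdx (pdx f) p) p.1 ∧
    HasDerivAt (fun y : ℝ => pdx (pdx f) (y, p.2)) (pdx (pdx (pdx f)) p) p.1 := by
  have hs : ContDiff ℝ (⊤ : ℕ∞) (fun y : ℝ => f (y, p.2)) := hf.comp (contDiff_prodMk_left p.2)
  have h1i : (1 : WithTop ℕ∞) ≤ ((⊤ : ℕ∞) : WithTop ℕ∞) := by
    exact_mod_cast (le_top : (1 : ℕ∞) ≤ ⊤)
  have hs0 : ContDiff ℝ ((⊤ : ℕ∞) : WithTop ℕ∞) (fun y : ℝ => f (y, p.2)) := hs.of_le (by simp)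
  have hs1 := (contDiff_infty_iff_deriv.mp hs0).2
  have hs2 := (contDiff_infty_iff_deriv.mp hs1).2
  refine ⟨((hs.differentiable (by simp)) p.1).hasDerivAt,
    ((hs1.differentiable (by simp)) p.1).hasDerivAt,
    ((hs2.differentiable (by simp)) p.1).hasDerivAt⟩

private lemma pdx_Qent1 (q r : ℝ × ℝ → ℂ) (hq : ContDiff ℝ (⊤ : ℕ∞) q) (hr : ContDiff ℝ (⊤ : ℕ∞) r)
    (ρ : ℝ) (l : ℂ) (p : ℝ × ℝ) :
    pdx (Qent1 q r ρ l) p =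
      (-(3*I) * (q p * pdx q p * (r p * r p) + q p * q p * (r p * pdx r p))
        - (pdx (pdx r) p * q p + pdx r p * pdx q p)
        + (pdx (pdx q) p * r p + pdx q p * pdx r p)) / (l*l)
      - 2*I*(pdx q p * r p + q p * pdx r p)/l^4 := by
  obtain ⟨A0, A1, A2⟩ := slice_hasDerivAt q hq p
  obtain ⟨B0, B1, B2⟩ := slice_hasDerivAt r hr p
  have hsum := ((((((((A0.mul A0).const_mul (-(3*I/2))).mul (B0.mul B0)).div_const (l*l)).sub
      (hasDerivAt_const p.1 (4*I*((ρ:ℂ)*(ρ:ℂ))))).sub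
      ((B1.mul A0).div_const (l*l))).add
      ((A1.mul B0).div_const (l*l))).sub
      (((A0.const_mul (2*I)).mul B0).div_const (l^4))).add
      (hasDerivAt_const p.1 (8*I*(ρ:ℂ)/l^4)) |>.sub
      (hasDerivAt_const p.1 (4*I/l^6))
  show deriv (fun x' : ℝ => Qent1 q r ρ l (x', p.2)) p.1 = _
  simp only [Qent1, pow_two]
  exact hsum.deriv.trans (by simp only [Prod.mk.eta, Pi.mul_apply]; ring)

private lemma pdx_Qent2 (q r : ℝ × ℝ → ℂ) (hq : ContDiff ℝ (⊤ : ℕ∞) q) (hr : ContDiff ℝ (⊤ : ℕ∞) r)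
    (ρ : ℝ) (l : ℂ) (p : ℝ × ℝ) :
    pdx (Qent2 q r ρ l) p =
      -pdx (pdx (pdx q)) p / l
      + 3*I*(pdx (pdx q) p * q p * r p + pdx q p * pdx q p * r p + pdx q p * q p * pdx r p)/l
      + 2*I*pdx (pdx q) p/(l*l*l)
      + (3/2)*(3*(q p*q p)*pdx q p*(r p*r p) + 2*(q p*q p*q p)*(r p*pdx r p))/l
      + 2*(2*(q p*pdx q p)*r p + (q p*q p)*pdx r p)*(ρ:ℂ)/l
      + 2*(2*(q p*pdx q p)*r p + (q p*q p)*pdx r p)/(l*l*l)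
      - 4*pdx q p*((ρ:ℂ)*(ρ:ℂ))/l - 4*pdx q p*(ρ:ℂ)/(l*l*l) + 4*pdx q p/l^5 := by
  obtain ⟨A0, A1, A2⟩ := slice_hasDerivAt q hq p
  obtain ⟨B0, B1, B2⟩ := slice_hasDerivAt r hr p
  have hsum := ((((((((A2.neg.div_const l).add
      ((((A1.const_mul (3*I)).mul A0).mul B0).div_const l)).add
      ((A1.const_mul (2*I)).div_const (l*l*l))).add
      (((((A0.mul A0).mul A0).const_mul ((3:ℂ)/2)).mul (B0.mul B0)).div_const l)).add
      (((((A0.mul A0).const_mul 2).mul B0).mul_const ((ρ:ℂ))).div_const l)).add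
      ((((A0.mul A0).const_mul 2).mul B0).div_const (l*l*l))).sub
      (((A0.const_mul 4).mul_const ((ρ:ℂ)*(ρ:ℂ))).div_const l)).sub
      (((A0.const_mul 4).mul_const ((ρ:ℂ))).div_const (l*l*l))).add
      ((A0.const_mul 4).div_const (l^5))
  show deriv (fun x' : ℝ => Qent2 q r ρ l (x', p.2)) p.1 = _
  simp only [Qent2, pow_two, pow_three']
  exact hsum.deriv.trans (by simp only [Prod.mk.eta, Pi.mul_apply]; ring)

private lemma pdx_Qent3 (q r : ℝ × ℝ → ℂ) (hq : ContDiff ℝ (⊤ : ℕ∞) q) (hr : ContDiff ℝ (⊤ : ℕ∞) r)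
    (ρ : ℝ) (l : ℂ) (p : ℝ × ℝ) :
    pdx (Qent3 q r ρ l) p =
      -pdx (pdx (pdx r)) p / l
      - 3*I*(pdx (pdx r) p * q p * r p + pdx r p * pdx q p * r p + pdx r p * q p * pdx r p)/l
      - 2*I*pdx (pdx r) p/(l*l*l)
      + (3/2)*(2*(q p*pdx q p)*(r p*r p*r p) + 3*(q p*q p)*((r p*r p)*pdx r p))/l
      + 2*(pdx q p*(r p*r p) + 2*(q p*(r p*pdx r p)))*(ρ:ℂ)/l
      + 2*(pdx q p*(r p*r p) + 2*(q p*(r p*pdx r p)))/(l*l*l)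
      - 4*pdx r p*((ρ:ℂ)*(ρ:ℂ))/l - 4*pdx r p*(ρ:ℂ)/(l*l*l) + 4*pdx r p/l^5 := by
  obtain ⟨A0, A1, A2⟩ := slice_hasDerivAt q hq p
  obtain ⟨B0, B1, B2⟩ := slice_hasDerivAt r hr p
  have hsum := ((((((((B2.neg.div_const l).sub
      ((((B1.const_mul (3*I)).mul A0).mul B0).div_const l)).sub
      ((B1.const_mul (2*I)).div_const (l*l*l))).add
      ((((A0.mul A0).const_mul ((3:ℂ)/2)).mul ((B0.mul B0).mul B0)).div_const l)).add
      ((((A0.const_mul 2).mul (B0.mul B0)).mul_const ((ρ:ℂ))).div_const l)).add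
      (((A0.const_mul 2).mul (B0.mul B0)).div_const (l*l*l))).sub
      (((B0.const_mul 4).mul_const ((ρ:ℂ)*(ρ:ℂ))).div_const l)).sub
      (((B0.const_mul 4).mul_const ((ρ:ℂ))).div_const (l*l*l))).add
      ((B0.const_mul 4).div_const (l^5))
  show deriv (fun x' : ℝ => Qent3 q r ρ l (x', p.2)) p.1 = _
  simp only [Qent3, pow_two, pow_three']
  exact hsum.deriv.trans (by simp only [Prod.mk.eta, Pi.mul_apply]; ring)

set_option maxHeartbeats 4000000 in
private lemma zc_point_iff (q r : ℝ × ℝ → ℂ) (hq : ContDiff ℝ (⊤ : ℕ∞) q) (hr : ContDiff ℝ (⊤ : ℕ∞) r)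
    (ρ : ℝ) (l : ℂ) (hl : l ≠ 0) (p : ℝ × ℝ) :
    (pdtM (LaxP q r ρ l) p - pdxM (LaxQ q r ρ l) p
          + (LaxP q r ρ l p * LaxQ q r ρ l p - LaxQ q r ρ l p * LaxP q r ρ l p) = 0)
      ↔ ((I * pdt q p + I * pdx (pdx (pdx q)) p
        + (3 * q p * r p + 2 * (ρ : ℂ)) * pdx (pdx q) p
        + 3 * r p * (pdx q p) ^ 2
        + (1 / 2) * (-9 * I * (q p) ^ 2 * (r p) ^ 2 - 20 * I * (ρ : ℂ) * q p * r p
            + 8 * I * (ρ : ℂ) ^ 2 + 6 * q p * pdx r p) * pdx q p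
        + I * (-3 * (q p) ^ 3 * r p - 2 * (ρ : ℂ) * (q p) ^ 2) * pdx r p
        - 3 * (ρ : ℂ) * (r p) ^ 2 * (q p) ^ 3
        - 4 * (ρ : ℂ) ^ 2 * r p * (q p) ^ 2
        + 8 * ((ρ : ℂ) ^ 3 - (ρ : ℂ) ^ 2) * q p = 0) ∧
    (I * pdt r p + I * pdx (pdx (pdx r)) p
        - (3 * q p * r p + 2 * (ρ : ℂ)) * pdx (pdx r) p
        - 3 * q p * (pdx r p) ^ 2
        + (1 / 2) * (-9 * I * (q p) ^ 2 * (r p) ^ 2 - 20 * I * (ρ : ℂ) * q p * r p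
            + 8 * I * (ρ : ℂ) ^ 2 - 6 * r p * pdx q p) * pdx r p
        + I * (-3 * (r p) ^ 3 * q p - 2 * (ρ : ℂ) * (r p) ^ 2) * pdx q p
        + 3 * (ρ : ℂ) * (r p) ^ 3 * (q p) ^ 2
        + 4 * (ρ : ℂ) ^ 2 * (r p) ^ 2 * q p
        + 8 * (-(ρ : ℂ) ^ 3 + (ρ : ℂ) ^ 2) * r p = 0)) := by
  have hTq : pdt (fun p' => q p' / l) p = pdt q p / l := by
    simp only [pdt]; exact deriv_div_const l
  have hTr : pdt (fun p' => r p' / l) p = pdt r p / l := by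
    simp only [pdt]; exact deriv_div_const l
  have hT0 : ∀ c : ℂ, pdt (fun _ : ℝ × ℝ => c) p = 0 := by
    intro c; simp [pdt]
  have hM : pdtM (LaxP q r ρ l) p - pdxM (LaxQ q r ρ l) p
      + (LaxP q r ρ l p * LaxQ q r ρ l p - LaxQ q r ρ l p * LaxP q r ρ l p)
      = !![0, -(I * l⁻¹ * (I * pdt q p + I * pdx (pdx (pdx q)) p
        + (3 * q p * r p + 2 * (ρ : ℂ)) * pdx (pdx q) p
        + 3 * r p * (pdx q p) ^ 2
        + (1 / 2) * (-9 * I * (q p) ^ 2 * (r p) ^ 2 - 20 * I * (ρ : ℂ) * q p * r p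
            + 8 * I * (ρ : ℂ) ^ 2 + 6 * q p * pdx r p) * pdx q p
        + I * (-3 * (q p) ^ 3 * r p - 2 * (ρ : ℂ) * (q p) ^ 2) * pdx r p
        - 3 * (ρ : ℂ) * (r p) ^ 2 * (q p) ^ 3
        - 4 * (ρ : ℂ) ^ 2 * r p * (q p) ^ 2
        + 8 * ((ρ : ℂ) ^ 3 - (ρ : ℂ) ^ 2) * q p));
        -(I * l⁻¹ * (I * pdt r p + I * pdx (pdx (pdx r)) p
        - (3 * q p * r p + 2 * (ρ : ℂ)) * pdx (pdx r) p
        - 3 * q p * (pdx r p) ^ 2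
        + (1 / 2) * (-9 * I * (q p) ^ 2 * (r p) ^ 2 - 20 * I * (ρ : ℂ) * q p * r p
            + 8 * I * (ρ : ℂ) ^ 2 - 6 * r p * pdx q p) * pdx r p
        + I * (-3 * (r p) ^ 3 * q p - 2 * (ρ : ℂ) * (r p) ^ 2) * pdx q p
        + 3 * (ρ : ℂ) * (r p) ^ 3 * (q p) ^ 2
        + 4 * (ρ : ℂ) ^ 2 * (r p) ^ 2 * q p
        + 8 * (-(ρ : ℂ) ^ 3 + (ρ : ℂ) ^ 2) * r p)), 0] := by
    ext i j
    fin_cases i <;> fin_cases j <;>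
      simp only [pdtM, pdxM, LaxP, LaxQ, Matrix.sub_apply, Matrix.add_apply, Matrix.mul_apply,
        Fin.sum_univ_two, Matrix.of_apply, Matrix.cons_val', Matrix.cons_val_zero,
        Matrix.cons_val_one, Matrix.head_cons, Matrix.head_fin_const, Matrix.empty_val',
        Matrix.cons_val_fin_one, Fin.isValue, Fin.zero_eta, Fin.mk_one]
    · rw [hT0, pdx_Qent1 q r hq hr ρ l p]
      simp only [Qent1, Qent2, Qent3]
      ring_nf
      try simp only [I_sq, I_pow_four]
      try ring
    · rw [hTq, pdx_Qent2 q r hq hr ρ l p]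
      simp only [Qent1, Qent2, Qent3]
      ring_nf
      try simp only [I_sq, I_pow_four]
      try ring
    · rw [hTr, pdx_Qent3 q r hq hr ρ l p]
      simp only [Qent1, Qent2, Qent3]
      ring_nf
      try simp only [I_sq, I_pow_four]
      try ring
    · rw [hT0]
      have : pdx (fun p' => -Qent1 q r ρ l p') p = -pdx (Qent1 q r ρ l) p := by
        show deriv (fun x' : ℝ => -Qent1 q r ρ l (x', p.2)) p.1 = _
        rw [deriv.fun_neg]
        rfl
      rw [this, pdx_Qent1 q r hq hr ρ l p]
      simp only [Qent1, Qent2, Qent3]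
      ring_nf
      try simp only [I_sq, I_pow_four]
      try ring
  rw [hM]
  have hc : (I * l⁻¹) ≠ 0 := mul_ne_zero I_ne_zero (inv_ne_zero hl)
  constructor
  · intro h
    have h01 := Matrix.ext_iff.mpr h 0 1
    have h10 := Matrix.ext_iff.mpr h 1 0
    simp only [Matrix.cons_val', Matrix.cons_val_zero, Matrix.cons_val_one, Matrix.head_cons,
      Matrix.empty_val', Matrix.cons_val_fin_one, Matrix.head_fin_const, Matrix.of_apply,
      Matrix.zero_apply, Fin.isValue, neg_eq_zero] at h01 h10
    exact ⟨(mul_eq_zero.mp h01).resolve_left hc, (mul_eq_zero.mp h10).resolve_left hc⟩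
  · rintro ⟨h1, h2⟩
    ext i j
    fin_cases i <;> fin_cases j <;>
      simp only [Matrix.cons_val', Matrix.cons_val_zero, Matrix.cons_val_one, Matrix.head_cons,
        Matrix.empty_val', Matrix.cons_val_fin_one, Matrix.head_fin_const, Matrix.of_apply,
        Matrix.zero_apply, Fin.isValue, Fin.zero_eta, Fin.mk_one]
    · rw [h1, mul_zero, neg_zero]
    · rw [h2, mul_zero, neg_zero]

/-- the zero-curvature equation for `(P(λ), Q(λ))` holds for every
nonzero spectral parameter `λ` iff `(q, r)` solves the coupled system (S). -/
theorem zero_curvature_iff_coupled_system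
    (q r : ℝ × ℝ → ℂ) (hq : ContDiff ℝ (⊤ : ℕ∞) q) (hr : ContDiff ℝ (⊤ : ℕ∞) r) (ρ : ℝ) :
    (∀ l : ℂ, l ≠ 0 → ∀ p : ℝ × ℝ,
        pdtM (LaxP q r ρ l) p - pdxM (LaxQ q r ρ l) p
          + (LaxP q r ρ l p * LaxQ q r ρ l p - LaxQ q r ρ l p * LaxP q r ρ l p) = 0)
      ↔ CoupledS q r ρ := by
  constructor
  · intro h p
    exact (zc_point_iff q r hq hr ρ 1 one_ne_zero p).mp (h 1 one_ne_zero p)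
  · intro h l hl p
    exact (zc_point_iff q r hq hr ρ l hl p).mpr (h p)
end

section
/- Let q : ℝ×ℝ → ℂ be smooth, ρ ∈ ℝ, and set r := −q* (the pointwise complex conjugate of q). Then the pair (q,r) satisfies the coupled system (S) at every (x,t) ∈ ℝ² if and only if q satisfies the local higher-order modified self-steepening nonlinear Schrödinger equation i qₜ + i q_{xxx} − 3 ∂ₓ[ |q|² q_x + (i/2)|q|⁴ q ] + ρ(2 q_{xx} − 3 |q|⁴ q) + ρ(2i q² ∂ₓ(q*) + 10 i |q|² q_x) + ρ²(4 |q|² q + 4 i q_x − 8 q) + 8 ρ³ q = 0 at every (x,t) ∈ ℝ². -/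
open Complex

/- ### Auxiliary lemmas -/

private lemma deriv_conj_comm (g : ℝ → ℂ) (x : ℝ) :
    deriv (fun y => (starRingEnd ℂ) (g y)) x = (starRingEnd ℂ) (deriv g x) := by
  have hfun : (fun y => (starRingEnd ℂ) (g y)) = ⇑Complex.conjCLE ∘ g := by
    funext y; simp [Complex.conjCLE_apply]
  by_cases h : DifferentiableAt ℝ g x
  · have h1 := (Complex.conjCLE.hasFDerivAt (x := g x)).comp_hasDerivAt_of_eq x h.hasDerivAt rfl
    rw [hfun]
    simpa [Complex.conjCLE_apply] using h1.deriv
  · have h2 : ¬ DifferentiableAt ℝ (⇑Complex.conjCLE ∘ g) x := fun hc =>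
      h (Complex.conjCLE.comp_differentiableAt_iff.mp hc)
    rw [hfun, deriv_zero_of_not_differentiableAt h2, deriv_zero_of_not_differentiableAt h,
      map_zero]

private lemma pdx_conj (f : ℝ × ℝ → ℂ) :
    pdx (fun p => (starRingEnd ℂ) (f p)) = fun p => (starRingEnd ℂ) (pdx f p) := by
  funext p
  exact deriv_conj_comm (fun x => f (x, p.2)) p.1

private lemma pdx_neg_conj (f : ℝ × ℝ → ℂ) :
    pdx (fun p => -(starRingEnd ℂ) (f p)) = fun p => -(starRingEnd ℂ) (pdx f p) := by
  funext p
  show deriv (fun x => -(starRingEnd ℂ) (f (x, p.2))) p.1 = _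
  rw [deriv.fun_neg, deriv_conj_comm]
  rfl

private lemma pdt_neg_conj (f : ℝ × ℝ → ℂ) :
    pdt (fun p => -(starRingEnd ℂ) (f p)) = fun p => -(starRingEnd ℂ) (pdt f p) := by
  funext p
  show deriv (fun t => -(starRingEnd ℂ) (f (p.1, t))) p.2 = _
  rw [deriv.fun_neg, deriv_conj_comm]
  rfl

private lemma diff_slice_x (f : ℝ × ℝ → ℂ) (hf : ContDiff ℝ (⊤ : ℕ∞) f) (p : ℝ × ℝ) :
    DifferentiableAt ℝ (fun x => f (x, p.2)) p.1 :=
  ((hf.differentiable (by simp)).comp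
    ((differentiable_id).prodMk (differentiable_const p.2))).differentiableAt

private lemma pdx_fderiv (f : ℝ × ℝ → ℂ) (hf : ContDiff ℝ (⊤ : ℕ∞) f) :
    pdx f = fun p => fderiv ℝ f p (1, 0) := by
  funext p
  have hι : HasDerivAt (fun x : ℝ => (x, p.2)) ((1 : ℝ), (0 : ℝ)) p.1 :=
    (hasDerivAt_id p.1).prodMk (hasDerivAt_const p.1 p.2)
  have h := ((hf.differentiable (by simp) (p.1, p.2)).hasFDerivAt.comp_hasDerivAt p.1 hι)
  exact h.deriv

private lemma contDiff_pdx (f : ℝ × ℝ → ℂ) (hf : ContDiff ℝ (⊤ : ℕ∞) f) :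
    ContDiff ℝ (⊤ : ℕ∞) (pdx f) := by
  rw [pdx_fderiv f hf]
  exact (hf.fderiv_right (by simp)).clm_apply contDiff_const

private lemma abs2 (z : ℂ) : ((‖z‖ : ℝ) : ℂ) ^ 2 = z * (starRingEnd ℂ) z := by
  rw [← ofReal_pow, Complex.sq_norm, Complex.mul_conj]

private lemma abs4 (z : ℂ) :
    ((‖z‖ : ℝ) : ℂ) ^ 4 = (z * (starRingEnd ℂ) z) ^ 2 := by
  rw [show (4 : ℕ) = 2 * 2 from rfl, pow_mul, abs2]

private lemma deriv_big (q : ℝ × ℝ → ℂ) (hq : ContDiff ℝ (⊤ : ℕ∞) q) (p : ℝ × ℝ) :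
    pdx (fun p' => q p' * (starRingEnd ℂ) (q p') * pdx q p'
        + I / 2 * (q p' * (starRingEnd ℂ) (q p')) ^ 2 * q p') p
    = ((pdx q p * (starRingEnd ℂ) (q p) + q p * (starRingEnd ℂ) (pdx q p)) * pdx q p
        + q p * (starRingEnd ℂ) (q p) * pdx (pdx q) p)
      + ((I / 2 * ((pdx q p * (starRingEnd ℂ) (q p) + q p * (starRingEnd ℂ) (pdx q p))
              * (q p * (starRingEnd ℂ) (q p))
            + q p * (starRingEnd ℂ) (q p)
              * (pdx q p * (starRingEnd ℂ) (q p) + q p * (starRingEnd ℂ) (pdx q p)))) * q p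
         + (I / 2 * (q p * (starRingEnd ℂ) (q p)) ^ 2) * pdx q p) := by
  have hQ : HasDerivAt (fun x => q (x, p.2)) (pdx q p) p.1 :=
    (diff_slice_x q hq p).hasDerivAt
  have hC : HasDerivAt (fun x => (starRingEnd ℂ) (q (x, p.2)))
      ((starRingEnd ℂ) (pdx q p)) p.1 := by
    have h1 := (Complex.conjCLE.hasFDerivAt (x := q (p.1, p.2))).comp_hasDerivAt_of_eq p.1 hQ rfl
    simpa [Complex.conjCLE_apply, Complex.conjCAE_apply, Function.comp_def] using h1
  have hQ1 : HasDerivAt (fun x => pdx q (x, p.2)) (pdx (pdx q) p) p.1 :=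
    (diff_slice_x (pdx q) (contDiff_pdx q hq) p).hasDerivAt
  have hsq : HasDerivAt (fun x => (q (x, p.2) * (starRingEnd ℂ) (q (x, p.2))) ^ 2)
      ((pdx q p * (starRingEnd ℂ) (q p) + q p * (starRingEnd ℂ) (pdx q p))
          * (q p * (starRingEnd ℂ) (q p))
        + q p * (starRingEnd ℂ) (q p)
          * (pdx q p * (starRingEnd ℂ) (q p) + q p * (starRingEnd ℂ) (pdx q p))) p.1 :=
    ((hQ.mul hC).mul (hQ.mul hC)).congr_of_eventuallyEq
      (Filter.Eventually.of_forall fun y => by simp only [Pi.mul_apply]; ring)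
  have hcm := hsq.const_mul (I / 2)
  have hprod := hcm.mul hQ
  have hfirst := (hQ.mul hC).mul hQ1
  exact (hfirst.add hprod).deriv

/-- with `r = -q*`, the coupled system (S) is equivalent to the local
higher-order modified self-steepening NLS equation. -/
theorem coupled_system_iff_local_equation
    (q : ℝ × ℝ → ℂ) (hq : ContDiff ℝ (⊤ : ℕ∞) q) (ρ : ℝ) :
    CoupledS q (fun p => -(starRingEnd ℂ) (q p)) ρ ↔
    ∀ p : ℝ × ℝ,
      I * pdt q p + I * pdx (pdx (pdx q)) p
        - 3 * pdx (fun p' => ((‖q p'‖ : ℂ)) ^ 2 * pdx q p'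
            + (I / 2) * ((‖q p'‖ : ℂ)) ^ 4 * q p') p
        + (ρ : ℂ) * (2 * pdx (pdx q) p - 3 * ((‖q p‖ : ℂ)) ^ 4 * q p)
        + (ρ : ℂ) * (2 * I * (q p) ^ 2 * pdx (fun p' => (starRingEnd ℂ) (q p')) p
            + 10 * I * ((‖q p‖ : ℂ)) ^ 2 * pdx q p)
        + (ρ : ℂ) ^ 2 * (4 * ((‖q p‖ : ℂ)) ^ 2 * q p + 4 * I * pdx q p - 8 * q p)
        + 8 * (ρ : ℂ) ^ 3 * q p = 0 := by
  constructor
  · intro h p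
    obtain ⟨h1, _⟩ := h p
    simp only [pdx_neg_conj, pdt_neg_conj] at h1
    simp only [abs2, abs4, pdx_conj]
    rw [deriv_big q hq p]
    linear_combination h1
  · intro h p
    have hL := h p
    simp only [abs2, abs4, pdx_conj] at hL
    rw [deriv_big q hq p] at hL
    have hLc := congrArg (starRingEnd ℂ) hL
    simp only [map_add, map_sub, map_mul, map_neg, map_pow, map_div₀, map_one, map_ofNat,
      map_zero, Complex.conj_conj, Complex.conj_I, Complex.conj_ofReal] at hLc
    constructor
    · simp only [pdx_neg_conj, pdt_neg_conj]
      linear_combination hL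
    · simp only [pdx_neg_conj, pdt_neg_conj]
      linear_combination hLc
end
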